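/- arXiv:2602.03682 — 7 statements merged into one kernel-verified Lean document; each statement's English description precedes it below -/
import Mathlib

section
/- For all t ≥ 0 and all x ∈ [0, 2√β], |p_t(x)| ≤ (√β)^t and |q_t(x)| ≤ (t+1)·(√β)^t. -/
/-!
Writing `β = s²` and `x = 2 s y`, the substitution `a n = s ^ n * b n` turns the recurrence
`a (n + 2) = x a (n + 1) - β a n` into the Chebyshev recurrence `b (n + 2) = 2 y b (n + 1) - b n`.
Hence `p t x = s ^ t T_t(y)` and `q t x = s ^ t U_t(y)` with `|y| ≤ 1`, where `|T_t| ≤ 1`, and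
`|U_t| ≤ t + 1` follows from `U_{t+1} = y U_t + T_{t+1}`.
-/

open Polynomial Polynomial.Chebyshev

lemma eq_pow_mul_of_rescaled_recurrence {R : Type*} [CommRing R] {a b : ℕ → R} {s y : R}
    (ha : ∀ n, a (n + 2) = 2 * s * y * a (n + 1) - s ^ 2 * a n)
    (hb : ∀ n, b (n + 2) = 2 * y * b (n + 1) - b n)
    (h0 : a 0 = b 0) (h1 : a 1 = s * b 1) (n : ℕ) : a n = s ^ n * b n := by
  induction n using Nat.twoStepInduction with
  | zero => simp [h0]
  | one => simp [h1]
  | more n ih₀ ih₁ => rw [ha, hb, ih₀, ih₁]; ring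

lemma eq_pow_mul_eval_T {R : Type*} [CommRing R] {a : ℕ → R} {s y : R}
    (ha : ∀ n, a (n + 2) = 2 * s * y * a (n + 1) - s ^ 2 * a n)
    (h0 : a 0 = 1) (h1 : a 1 = s * y) (n : ℕ) : a n = s ^ n * (T R n).eval y :=
  eq_pow_mul_of_rescaled_recurrence (b := fun n => (T R n).eval y) ha
    (fun n => by push_cast; simp [T_add_two]) (by simp [h0]) (by simp [h1]) n

lemma eq_pow_mul_eval_U {R : Type*} [CommRing R] {a : ℕ → R} {s y : R}
    (ha : ∀ n, a (n + 2) = 2 * s * y * a (n + 1) - s ^ 2 * a n)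
    (h0 : a 0 = 1) (h1 : a 1 = 2 * s * y) (n : ℕ) : a n = s ^ n * (U R n).eval y :=
  eq_pow_mul_of_rescaled_recurrence (b := fun n => (U R n).eval y) ha
    (fun n => by push_cast; simp [U_add_two]) (by simp [h0]) (by simp [h1]; ring) n

lemma abs_eval_U_real_le {y : ℝ} (hy : |y| ≤ 1) (n : ℕ) : |(U ℝ n).eval y| ≤ n + 1 := by
  induction n with
  | zero => simp
  | succ n ih =>
    have hT := abs_eval_T_real_le_one (↑(n + 1)) hy
    calc |(U ℝ ↑(n + 1)).eval y|
        = |y * (U ℝ n).eval y + (T ℝ ↑(n + 1)).eval y| := by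
          push_cast; simp [U_eq_X_mul_U_add_T]
      _ ≤ |y| * |(U ℝ n).eval y| + |(T ℝ ↑(n + 1)).eval y| := by
          rw [← abs_mul]; exact abs_add_le _ _
      _ ≤ 1 * (n + 1) + 1 := by gcongr
      _ = ↑(n + 1) + 1 := by push_cast; ring

/-- for all t ≥ 0 and x ∈ [0, 2√β],
|p_t(x)| ≤ (√β)^t and |q_t(x)| ≤ (t+1)(√β)^t. -/
theorem stmt2 (β : ℝ) (hβ : 0 < β) (p q : ℕ → ℝ → ℝ)
    (hp0 : ∀ x, p 0 x = 1) (hp1 : ∀ x, p 1 x = x / 2)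
    (hprec : ∀ t x, p (t + 2) x = x * p (t + 1) x - β * p t x)
    (hq0 : ∀ x, q 0 x = 1) (hq1 : ∀ x, q 1 x = x)
    (hqrec : ∀ t x, q (t + 2) x = x * q (t + 1) x - β * q t x)
    (t : ℕ) (x : ℝ) (hx : x ∈ Set.Icc 0 (2 * Real.sqrt β)) :
    |p t x| ≤ Real.sqrt β ^ t ∧ |q t x| ≤ (t + 1) * Real.sqrt β ^ t := by
  set s := Real.sqrt β
  have hs : 0 < s := Real.sqrt_pos.mpr hβ
  have hβs : β = s ^ 2 := (Real.sq_sqrt hβ.le).symm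
  set y := x / (2 * s)
  have hxy : x = 2 * s * y := by simp only [y]; field_simp
  have hy : |y| ≤ 1 := by
    rw [abs_of_nonneg (div_nonneg hx.1 (by positivity)), div_le_one (by positivity)]
    exact hx.2
  have hpT : p t x = s ^ t * (T ℝ t).eval y :=
    eq_pow_mul_eval_T (a := (p · x)) (fun n => by rw [hprec, ← hxy, hβs]) (hp0 x)
      (by rw [hp1, hxy]; ring) t
  have hqU : q t x = s ^ t * (U ℝ t).eval y :=
    eq_pow_mul_eval_U (a := (q · x)) (fun n => by rw [hqrec, ← hxy, hβs]) (hq0 x)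
      (by rw [hq1, hxy]) t
  rw [hpT, hqU, abs_mul, abs_mul, abs_of_pos (pow_pos hs t)]
  constructor
  · simpa using mul_le_mul_of_nonneg_left (abs_eval_T_real_le_one t hy) (pow_pos hs t).le
  · simpa [mul_comm] using mul_le_mul_of_nonneg_left (abs_eval_U_real_le hy t) (pow_pos hs t).le
end

section
/- Let c ∈ (0, 1/2) and β, λ > 0 with 4β ≤ λ², and let Δ ∈ [0,1] with 2√β = (1−Δ)λ. Consider any sequence of k×k real matrices G_t with G_0 = (I/2 + E_0)^{-1} and G_{t+1} = (I − (β/λ²)·G_t' + E_{t+1})^{-1}, where at each step ‖E_t‖₂ ≤ cΔ and G_t' is any matrix with ‖G_t'‖₂ ≤ ‖G_t‖₂ (e.g. G_t' = Λ^{-1}G_tΛ^{-1}λ² for diagonal Λ with entries ≥ λ). Then all inverses exist and ‖G_t‖₂ ≤ 1/(1/2 − cΔ) for all t ≥ 0. -/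
open Matrix

/-- Spectral norm (largest singular value) of a real matrix. -/
noncomputable def specNorm {m n : ℕ} (M : Matrix (Fin m) (Fin n) ℝ) : ℝ :=
  sSup {r | ∃ v : EuclideanSpace ℝ (Fin n), ‖v‖ = 1 ∧
    r = ‖(WithLp.equiv 2 (Fin m → ℝ)).symm (M.mulVec (WithLp.equiv 2 (Fin n → ℝ) v))‖}

/-- Smallest singular value of a real matrix. -/
noncomputable def sigmaMin {m n : ℕ} (M : Matrix (Fin m) (Fin n) ℝ) : ℝ :=
  sInf {r | ∃ v : EuclideanSpace ℝ (Fin n), ‖v‖ = 1 ∧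
    r = ‖(WithLp.equiv 2 (Fin m → ℝ)).symm (M.mulVec (WithLp.equiv 2 (Fin n → ℝ) v))‖}

/-!
Put `ε = cΔ` and write every matrix to be inverted as `1 - T`. If `‖T‖ ≤ 1/2 + ε`, the Neumann
series shows that `1 - T` is invertible with `‖(1 - T)⁻¹‖ ≤ (1 - ‖T‖)⁻¹ ≤ (1/2 - ε)⁻¹`. For
`G 0` take `T = I/2 - E 0`. For `G (t + 1)` take `T = a G' t - E (t + 1)` with `a = β/λ² = (1 - Δ)²/4`:
given the bound `B = (1/2 - ε)⁻¹` on `‖G t‖`, the condition `a ≤ (1/2 - ε)/2`, i.e.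
`(1 - Δ)² ≤ 1 - 2cΔ`, gives `a B ≤ 1/2` and hence `‖T‖ ≤ 1/2 + ε` again.
-/

open scoped Matrix.Norms.L2Operator

theorem specNorm_eq_l2_opNorm {m n : ℕ} (M : Matrix (Fin m) (Fin n) ℝ) : specNorm M = ‖M‖ := by
  rw [l2_opNorm_def, ← ContinuousLinearMap.sSup_sphere_eq_norm, specNorm]
  congr 1
  ext r
  simp only [Set.mem_ofPred_eq, Set.mem_image, mem_sphere_iff_norm, sub_zero, eq_comm (a := r)]
  rfl

theorem Matrix.l2_opNorm_one_le {n : Type*} [Fintype n] [DecidableEq n] :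
    ‖(1 : Matrix n n ℝ)‖ ≤ 1 := by
  rw [cstar_norm_def, map_one]
  exact ContinuousLinearMap.norm_id_le

section NormedRing

variable {R : Type*} [NormedRing R] [HasSummableGeomSeries R]

theorem norm_ringInverse_one_sub_le (h1 : ‖(1 : R)‖ ≤ 1) {t : R} (ht : ‖t‖ < 1) :
    ‖Ring.inverse (1 - t)‖ ≤ (1 - ‖t‖)⁻¹ := by
  rw [← geom_series_eq_inverse t ht]
  linarith [tsum_geometric_le_of_norm_lt_one t ht]

theorem isUnit_one_sub_and_norm_ringInverse_le (h1 : ‖(1 : R)‖ ≤ 1) {ε : ℝ} (hε : ε < 1 / 2)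
    {T : R} (hT : ‖T‖ ≤ 1 / 2 + ε) :
    IsUnit (1 - T) ∧ ‖Ring.inverse (1 - T)‖ ≤ (1 / 2 - ε)⁻¹ := by
  have hT1 : ‖T‖ < 1 := by linarith
  exact ⟨isUnit_one_sub_of_norm_lt_one hT1,
    (norm_ringInverse_one_sub_le h1 hT1).trans (inv_anti₀ (by linarith) (by linarith))⟩

theorem riccati_recursion_isUnit_and_norm_le [NormedAlgebra ℝ R] (h1 : ‖(1 : R)‖ ≤ 1)
    {a ε : ℝ} (ha : 0 ≤ a) (hε : ε < 1 / 2) (haε : a ≤ (1 / 2 - ε) / 2) (G G' E : ℕ → R)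
    (hE : ∀ t, ‖E t‖ ≤ ε) (hG' : ∀ t, ‖G' t‖ ≤ ‖G t‖)
    (hG0 : G 0 = Ring.inverse ((1 / 2 : ℝ) • 1 + E 0))
    (hGrec : ∀ t, G (t + 1) = Ring.inverse (1 - a • G' t + E (t + 1))) :
    IsUnit ((1 / 2 : ℝ) • (1 : R) + E 0) ∧ (∀ t, IsUnit (1 - a • G' t + E (t + 1))) ∧
      ∀ t, ‖G t‖ ≤ (1 / 2 - ε)⁻¹ := by
  have init_eq : (1 / 2 : ℝ) • (1 : R) + E 0 = 1 - ((1 / 2 : ℝ) • 1 - E 0) := by module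
  have init_le : ‖(1 / 2 : ℝ) • (1 : R) - E 0‖ ≤ 1 / 2 + ε := by
    calc ‖(1 / 2 : ℝ) • (1 : R) - E 0‖ ≤ 1 / 2 * ‖(1 : R)‖ + ‖E 0‖ := by
          refine (norm_sub_le _ _).trans ?_
          rw [norm_smul, Real.norm_of_nonneg (by norm_num)]
      _ ≤ 1 / 2 + ε := by linarith [hE 0]
  have step_eq (t : ℕ) : 1 - a • G' t + E (t + 1) = 1 - (a • G' t - E (t + 1)) := by abel
  have step_le (t : ℕ) (ht : ‖G t‖ ≤ (1 / 2 - ε)⁻¹) : ‖a • G' t - E (t + 1)‖ ≤ 1 / 2 + ε := by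
    have haB : a * (1 / 2 - ε)⁻¹ ≤ 1 / 2 := by
      rw [← div_eq_mul_inv, div_le_iff₀ (by linarith)]
      linarith
    calc ‖a • G' t - E (t + 1)‖ ≤ a * ‖G' t‖ + ‖E (t + 1)‖ := by
          refine (norm_sub_le _ _).trans ?_
          rw [norm_smul, Real.norm_of_nonneg ha]
      _ ≤ a * (1 / 2 - ε)⁻¹ + ε := by gcongr; exacts [(hG' t).trans ht, hE (t + 1)]
      _ ≤ 1 / 2 + ε := by linarith
  have bound (t : ℕ) : ‖G t‖ ≤ (1 / 2 - ε)⁻¹ := by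
    induction t with
    | zero => rw [hG0, init_eq]; exact (isUnit_one_sub_and_norm_ringInverse_le h1 hε init_le).2
    | succ t ih =>
      rw [hGrec, step_eq]
      exact (isUnit_one_sub_and_norm_ringInverse_le h1 hε (step_le t ih)).2
  refine ⟨?_, fun t ↦ ?_, bound⟩
  · rw [init_eq]; exact (isUnit_one_sub_and_norm_ringInverse_le h1 hε init_le).1
  · rw [step_eq]; exact (isUnit_one_sub_and_norm_ringInverse_le h1 hε (step_le t (bound t))).1

end NormedRing

theorem div_sq_le_of_two_mul_sqrt_eq {β lam Δ : ℝ} (hβ : 0 ≤ β)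
    (h : 2 * Real.sqrt β = (1 - Δ) * lam) : β / lam ^ 2 ≤ (1 - Δ) ^ 2 / 4 := by
  have hsq : 4 * β = (1 - Δ) ^ 2 * lam ^ 2 := by
    have := congrArg (· ^ 2) h
    simp only [mul_pow, Real.sq_sqrt hβ] at this
    linarith
  exact div_le_of_le_mul₀ (sq_nonneg _) (by positivity) (by linarith)

theorem stmt7_general (k : ℕ) (c β lam Δ : ℝ)
    (hc : c ∈ Set.Ioo (0:ℝ) (1/2)) (hβ : 0 < β)
    (hΔ : Δ ∈ Set.Icc (0:ℝ) 1)
    (hΔβ : 2 * Real.sqrt β = (1 - Δ) * lam)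
    (G G' E : ℕ → Matrix (Fin k) (Fin k) ℝ)
    (hE : ∀ t, specNorm (E t) ≤ c * Δ)
    (hG' : ∀ t, specNorm (G' t) ≤ specNorm (G t))
    (hG0 : G 0 = ((1/2 : ℝ) • (1 : Matrix (Fin k) (Fin k) ℝ) + E 0)⁻¹)
    (hGrec : ∀ t, G (t + 1)
      = ((1 : Matrix (Fin k) (Fin k) ℝ) - (β / lam ^ 2) • G' t + E (t + 1))⁻¹) :
    IsUnit ((1/2 : ℝ) • (1 : Matrix (Fin k) (Fin k) ℝ) + E 0) ∧
      (∀ t, IsUnit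
        ((1 : Matrix (Fin k) (Fin k) ℝ) - (β / lam ^ 2) • G' t + E (t + 1))) ∧
      ∀ t, specNorm (G t) ≤ 1 / (1/2 - c * Δ) := by
  obtain ⟨hc0, hc2⟩ := hc
  obtain ⟨hΔ0, hΔ1⟩ := hΔ
  have hcΔ : c * Δ < 1 / 2 := by nlinarith
  have ha : β / lam ^ 2 ≤ (1 / 2 - c * Δ) / 2 :=
    (div_sq_le_of_two_mul_sqrt_eq hβ.le hΔβ).trans (by nlinarith)
  simp only [specNorm_eq_l2_opNorm] at hE hG' ⊢
  simp only [nonsing_inv_eq_ringInverse] at hG0 hGrec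
  simpa only [one_div] using riccati_recursion_isUnit_and_norm_le l2_opNorm_one_le
    (div_nonneg hβ.le (sq_nonneg lam)) hcΔ ha G G' E hE hG' hG0 hGrec

/-- the perturbed matrix Riccati recursion
G_0 = (I/2 + E_0)⁻¹, G_{t+1} = (I − (β/λ²)G_t' + E_{t+1})⁻¹, with
‖E_t‖₂ ≤ cΔ and ‖G_t'‖₂ ≤ ‖G_t‖₂, is well defined (all the matrices being
inverted are invertible) and ‖G_t‖₂ ≤ 1/(1/2 − cΔ) for all t. -/
theorem stmt7 (k : ℕ) (c β lam Δ : ℝ)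
    (hc : c ∈ Set.Ioo (0:ℝ) (1/2)) (hβ : 0 < β) (hlam : 0 < lam)
    (h4β : 4 * β ≤ lam ^ 2) (hΔ : Δ ∈ Set.Icc (0:ℝ) 1)
    (hΔβ : 2 * Real.sqrt β = (1 - Δ) * lam)
    (G G' E : ℕ → Matrix (Fin k) (Fin k) ℝ)
    (hE : ∀ t, specNorm (E t) ≤ c * Δ)
    (hG' : ∀ t, specNorm (G' t) ≤ specNorm (G t))
    (hG0 : G 0 = ((1/2 : ℝ) • (1 : Matrix (Fin k) (Fin k) ℝ) + E 0)⁻¹)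
    (hGrec : ∀ t, G (t + 1)
      = ((1 : Matrix (Fin k) (Fin k) ℝ) - (β / lam ^ 2) • G' t + E (t + 1))⁻¹) :
    IsUnit ((1/2 : ℝ) • (1 : Matrix (Fin k) (Fin k) ℝ) + E 0) ∧
      (∀ t, IsUnit
        ((1 : Matrix (Fin k) (Fin k) ℝ) - (β / lam ^ 2) • G' t + E (t + 1))) ∧
      ∀ t, specNorm (G t) ≤ 1 / (1/2 - c * Δ) :=
  stmt7_general k c β lam Δ hc hβ hΔ hΔβ G G' E hE hG' hG0 hGrec
end

section
/- Let c ∈ (0,1/2), β, λ > 0 with 4β/λ² = (1−Δ)² for some Δ ∈ (0,1], and define the scalar sequence m_0 = 1/(1/2 − cΔ), m_{t+1} = 1/((1 − cΔ) − (β/λ²)·m_t). Then for all t ≥ 0, m_t = y_t / y_{t+1} where y_t = κ₊ r₊^t + κ₋ r₋^t with r_± = ((1−cΔ) ± √((1−cΔ)² − 4β/λ²))/2, κ_± = (1 ∓ cΔ/√((1−cΔ)² − 4β/λ²))/2, and 0 < m_t ≤ 1/(1/2 − cΔ) for all t. -/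
/-!
With `a = cΔ`, the relation `2√β = (1 - Δ)λ` makes `β/λ² = (1 - Δ)²/4`, so the discriminant is
positive and `y_t` solves `y_{t+2} = (1 - a) y_{t+1} - (β/λ²) y_t` with `y_0 = 1`, `y_1 = 1/2 - a`.
The ratios `y_t / y_{t+1}` then obey the Riccati recursion of `m_t`. The invariant
`(1/2 - a) y_t ≤ y_{t+1}` survives a step of the recurrence because `(1 - Δ)² ≤ 1 - 2a`, and it gives
both `y_t > 0` and `m_t ≤ 1/(1/2 - a)`.
-/

namespace Riccati

theorem quadratic_roots_sq_eq {p q s : ℝ} (hs : s ^ 2 = p ^ 2 - 4 * q) :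
    ((p + s) / 2) ^ 2 = p * ((p + s) / 2) - q ∧ ((p - s) / 2) ^ 2 = p * ((p - s) / 2) - q :=
  ⟨by linear_combination hs / 4, by linear_combination hs / 4⟩

theorem geom_sum_recurrence {p q r₁ r₂ : ℝ} (κ₁ κ₂ : ℝ)
    (h₁ : r₁ ^ 2 = p * r₁ - q) (h₂ : r₂ ^ 2 = p * r₂ - q) (t : ℕ) :
    κ₁ * r₁ ^ (t + 2) + κ₂ * r₂ ^ (t + 2) =
      p * (κ₁ * r₁ ^ (t + 1) + κ₂ * r₂ ^ (t + 1)) - q * (κ₁ * r₁ ^ t + κ₂ * r₂ ^ t) := by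
  linear_combination κ₁ * r₁ ^ t * h₁ + κ₂ * r₂ ^ t * h₂

variable {p q : ℝ} {y : ℕ → ℝ}

theorem pos_and_mul_le_succ {d : ℝ} (hd : 0 < d) (hdp : d ≤ p) (hq : q ≤ (p - d) * d)
    (hy : ∀ t, y (t + 2) = p * y (t + 1) - q * y t) (hy0 : 0 < y 0) (hy1 : d * y 0 ≤ y 1) :
    ∀ t, 0 < y t ∧ d * y t ≤ y (t + 1) := by
  intro t
  induction t with
  | zero => exact ⟨hy0, hy1⟩
  | succ t ih =>
    obtain ⟨hpos, hgrow⟩ := ih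
    refine ⟨lt_of_lt_of_le (mul_pos hd hpos) hgrow, ?_⟩
    have hgrow' : (p - d) * (d * y t) ≤ (p - d) * y (t + 1) :=
      mul_le_mul_of_nonneg_left hgrow (sub_nonneg.mpr hdp)
    nlinarith [hy t, mul_le_mul_of_nonneg_right hq hpos.le]

theorem eq_div_succ_of_riccati {m : ℕ → ℝ} (hy : ∀ t, y (t + 2) = p * y (t + 1) - q * y t)
    (hne : ∀ t, y t ≠ 0) (hm0 : m 0 = y 0 / y 1) (hm : ∀ t, m (t + 1) = 1 / (p - q * m t)) :
    ∀ t, m t = y t / y (t + 1) := by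
  intro t
  induction t with
  | zero => exact hm0
  | succ t ih =>
    have hden : p - q * (y t / y (t + 1)) = y (t + 2) / y (t + 1) := by
      rw [hy t]
      field_simp [hne (t + 1)]
    rw [hm t, ih, hden, one_div_div]

end Riccati

open Riccati

theorem beta_div_sq_eq {β lam Δ : ℝ} (hβ : 0 ≤ β) (hlam : lam ≠ 0)
    (hrel : 2 * Real.sqrt β = (1 - Δ) * lam) : β / lam ^ 2 = (1 - Δ) ^ 2 / 4 := by
  rw [← Real.sq_sqrt hβ, div_eq_iff (pow_ne_zero 2 hlam)]
  linear_combination (Real.sqrt β + (1 - Δ) * lam / 2) * hrel / 2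

/-- the Riccati sequence m_0 = 1/(1/2 − cΔ),
m_{t+1} = 1/((1−cΔ) − (β/λ²)m_t) satisfies m_t = y_t/y_{t+1} with
y_t = κ₊r₊^t + κ₋r₋^t, and 0 < m_t ≤ 1/(1/2 − cΔ). -/
theorem stmt8 (c Δ β lam : ℝ) (hc : c ∈ Set.Ioo (0:ℝ) (1/2))
    (hΔ : Δ ∈ Set.Ioc (0:ℝ) 1) (hβ : 0 < β) (hlam : 0 < lam)
    (hrel : 2 * Real.sqrt β = (1 - Δ) * lam)
    (m : ℕ → ℝ) (hm0 : m 0 = 1 / (1/2 - c * Δ))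
    (hmrec : ∀ t, m (t + 1) = 1 / ((1 - c * Δ) - (β / lam ^ 2) * m t)) :
    let s := Real.sqrt ((1 - c * Δ) ^ 2 - 4 * β / lam ^ 2)
    let rP := ((1 - c * Δ) + s) / 2
    let rM := ((1 - c * Δ) - s) / 2
    let κP := (1 - c * Δ / s) / 2
    let κM := (1 + c * Δ / s) / 2
    ∀ t : ℕ,
      m t = (κP * rP ^ t + κM * rM ^ t) / (κP * rP ^ (t+1) + κM * rM ^ (t+1)) ∧
      0 < m t ∧ m t ≤ 1 / (1/2 - c * Δ) := by
  intro s rP rM κP κM t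
  obtain ⟨hc0, hc1⟩ := hc
  obtain ⟨hΔ0, hΔ1⟩ := hΔ
  have hq : β / lam ^ 2 = (1 - Δ) ^ 2 / 4 := beta_div_sq_eq hβ.le hlam.ne' hrel
  have hd : 0 < 1 / 2 - c * Δ := by nlinarith
  have hdisc : 0 < (1 - c * Δ) ^ 2 - 4 * β / lam ^ 2 := by
    have hlt : 1 - Δ < 1 - c * Δ := by nlinarith
    rw [mul_div_assoc, hq]
    nlinarith [pow_lt_pow_left₀ hlt (sub_nonneg.mpr hΔ1) two_ne_zero]
  have hs : s ^ 2 = (1 - c * Δ) ^ 2 - 4 * (β / lam ^ 2) := by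
    rw [Real.sq_sqrt hdisc.le, mul_div_assoc]
  have hs0 : s ≠ 0 := (Real.sqrt_pos.mpr hdisc).ne'
  obtain ⟨hrP, hrM⟩ := quadratic_roots_sq_eq hs
  set y : ℕ → ℝ := fun t => κP * rP ^ t + κM * rM ^ t
  have hy : ∀ t, y (t + 2) = (1 - c * Δ) * y (t + 1) - β / lam ^ 2 * y t :=
    geom_sum_recurrence κP κM hrP hrM
  have hy0 : y 0 = 1 := by simp only [y, κP, κM, pow_zero]; ring
  have hy1 : y 1 = 1 / 2 - c * Δ := by simp only [y, κP, κM, rP, rM, pow_one]; field_simp; ring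
  have hq_le : β / lam ^ 2 ≤ (1 - c * Δ - (1 / 2 - c * Δ)) * (1 / 2 - c * Δ) := by
    rw [hq]; nlinarith
  have hgrow := pos_and_mul_le_succ hd (by linarith) hq_le hy
    (by rw [hy0]; norm_num) (by rw [hy0, hy1, mul_one])
  have hmy := eq_div_succ_of_riccati hy (fun t => (hgrow t).1.ne') (by rw [hm0, hy0, hy1]) hmrec
  obtain ⟨hyt, hyt1⟩ := hgrow t
  have hyt1_pos : 0 < y (t + 1) := (hgrow (t + 1)).1
  refine ⟨hmy t, ?_, ?_⟩
  · rw [hmy t]; exact div_pos hyt hyt1_pos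
  · rw [hmy t, div_le_div_iff₀ hyt1_pos hd]; linarith
end

section
/- Let λ > 2√β > 0, c = 1/32, Δ = 1 − 2√β/λ, and λ⁺ = (λ + √(λ² − 4β))/2. Define r₊ := ((1−cΔ) + √((1−cΔ)² − 4β/λ²))/2. Then λ·r₊ ≥ (1−c)·λ⁺ + c·√β. -/
/-! With `s = √β`, one has `λ (1 - cΔ) = (1 - c) λ + c · 2s`, so `λ r₊` is the larger root
`(u + √(u² - 4β)) / 2` at the convex combination `u` of `λ` and `2s`. The map
`u ↦ √(u² - 4s²)` is concave on `[2s, ∞)` and vanishes at `2s`, hence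
`√(u² - 4β) ≥ (1 - c) √(λ² - 4β)`, which is the claim. -/

open Real

lemma mul_sqrt_sq_sub_le_sqrt_convex_comb {s x t : ℝ} (hs : 0 ≤ s) (hx : 2 * s ≤ x)
    (ht₀ : 0 ≤ t) (ht₁ : t ≤ 1) :
    t * √(x ^ 2 - 4 * s ^ 2) ≤ √((t * x + (1 - t) * (2 * s)) ^ 2 - 4 * s ^ 2) := by
  -- both radicands factor through `x - 2s`; compare the cofactors `t (x + 2s) ≤ t x + (2 - t) 2s`
  have hcofactor : t * (x + 2 * s) ≤ t * x + (2 - t) * (2 * s) := by nlinarith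
  calc t * √(x ^ 2 - 4 * s ^ 2) = √(t ^ 2 * (x ^ 2 - 4 * s ^ 2)) := by
        rw [sqrt_mul (sq_nonneg t), sqrt_sq ht₀]
    _ = √(t * (x - 2 * s) * (t * (x + 2 * s))) := by ring_nf
    _ ≤ √(t * (x - 2 * s) * (t * x + (2 - t) * (2 * s))) := by gcongr
    _ = √((t * x + (1 - t) * (2 * s)) ^ 2 - 4 * s ^ 2) := by ring_nf

lemma mul_sqrt_sq_sub_div_sq {lam : ℝ} (hlam : 0 < lam) (a b : ℝ) :
    lam * √(a ^ 2 - b / lam ^ 2) = √((lam * a) ^ 2 - b) := by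
  rw [← sqrt_sq hlam.le, ← sqrt_mul (sq_nonneg lam), sqrt_sq hlam.le]
  congr 1
  field_simp

/-- with λ > 2√β > 0, c = 1/32, Δ = 1 − 2√β/λ,
λ⁺ = (λ + √(λ² − 4β))/2 and r₊ := ((1−cΔ) + √((1−cΔ)² − 4β/λ²))/2,
one has λ·r₊ ≥ (1−c)·λ⁺ + c·√β. -/
theorem stmt10 (β lam c Δ lamPlus rPlus : ℝ)
    (hβ : 0 < Real.sqrt β) (hlam : 2 * Real.sqrt β < lam)
    (hc : c = 1/32) (hΔ : Δ = 1 - 2 * Real.sqrt β / lam)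
    (hlamPlus : lamPlus = (lam + Real.sqrt (lam ^ 2 - 4 * β)) / 2)
    (hrPlus : rPlus =
      ((1 - c * Δ) + Real.sqrt ((1 - c * Δ) ^ 2 - 4 * β / lam ^ 2)) / 2) :
    (1 - c) * lamPlus + c * Real.sqrt β ≤ lam * rPlus := by
  set s := √β
  have hβs : β = s ^ 2 := (sq_sqrt (sqrt_pos.mp hβ).le).symm
  have hlam₀ : 0 < lam := by linarith
  have hu : lam * (1 - c * Δ) = (1 - c) * lam + c * (2 * s) := by
    rw [hΔ]
    field_simp
    ring
  have hroot : lam * rPlus = (lam * (1 - c * Δ) + √((lam * (1 - c * Δ)) ^ 2 - 4 * β)) / 2 := by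
    rw [hrPlus, ← mul_sqrt_sq_sub_div_sq hlam₀]
    ring
  have hconcave := mul_sqrt_sq_sub_le_sqrt_convex_comb (sqrt_nonneg β) hlam.le
    (t := 1 - c) (by rw [hc]; norm_num) (by rw [hc]; norm_num)
  rw [sub_sub_cancel, ← hβs] at hconcave
  rw [hroot, hu, hlamPlus]
  linarith
end

section
/- Let λ > 2√β > 0 and set λ^± = (λ ± √(λ²−4β))/2. For the noiseless momentum power iteration on the diagonal matrix A = diag(λ,…,λ, 2√β,…,2√β) (λ repeated k times), starting from X₀ ∈ St(d,k) with cos θ_k(U_k, X₀) > 0, one has for all t ≥ 0: tan θ_k(U_k, X_t) = (2(√β)^t / ((λ⁺)^t + (λ⁻)^t)) · tan θ_k(U_k, X₀) ≥ (√β/λ⁺)^t · tan θ_k(U_k, X₀). -/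
/-!
On the first `k` coordinates the diagonal matrix `p_t(A)` is the scalar `p_t(λ)`, on the last
`d - k` the scalar `p_t(2√β)`. So the two blocks `U_kᵀ X_t R_t` and `U_{-k}ᵀ X_t R_t` of
`p_t(A) X₀` are scalar multiples of those of `X₀`; the factor `R_t` cancels in
`(U_{-k}ᵀ X_t)(U_kᵀ X_t)⁻¹`, so `tan θ_k` gets multiplied by `p_t(2√β) / p_t(λ)`. The recursion
gives `p_t(x) = (aᵗ + bᵗ)/2` whenever `a + b = x` and `ab = β`, with `a, b = λ^±` at `x = λ`
and `a = b = √β` at `x = 2√β`.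
-/

open Matrix

/-- The matrix whose columns are the first k standard basis vectors of ℝ^d. -/
def topBasis (d k : ℕ) : Matrix (Fin d) (Fin k) ℝ :=
  Matrix.of fun i j => if (i : ℕ) = (j : ℕ) then 1 else 0

/-- The matrix whose columns are the last d−k standard basis vectors of ℝ^d. -/
def botBasis (d k : ℕ) : Matrix (Fin d) (Fin (d - k)) ℝ :=
  Matrix.of fun i j => if (i : ℕ) = (j : ℕ) + k then 1 else 0

/-- tan of the largest principal angle between range(U_k) and range(M):
tan θ_k(U_k, M) = ‖(U_{−k}ᵀ M)(U_kᵀ M)⁻¹‖₂. -/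
noncomputable def tanThetaK (d k : ℕ) (M : Matrix (Fin d) (Fin k) ℝ) : ℝ :=
  specNorm (((botBasis d k)ᵀ * M) * ((topBasis d k)ᵀ * M)⁻¹)

theorem chebyshev_eq_pow_add_pow {K : Type*} [Field K] [NeZero (2 : K)] {p : ℕ → K}
    {x β a b : K} (hsum : a + b = x) (hprod : a * b = β)
    (h0 : p 0 = 1) (h1 : p 1 = x / 2) (hrec : ∀ t, p (t + 2) = x * p (t + 1) - β * p t)
    (t : ℕ) : p t = (a ^ t + b ^ t) / 2 := by
  induction t using Nat.twoStepInduction with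
  | zero => rw [h0, pow_zero, pow_zero, one_add_one_eq_two, div_self two_ne_zero]
  | one => rw [h1, ← hsum]; ring
  | more n ih ih' => rw [hrec, ih, ih', ← hsum, ← hprod]; ring

theorem Matrix.inv_smul_of_ne_zero {n K : Type*} [Fintype n] [DecidableEq n] [Field K]
    (A : Matrix n n K) {c : K} (hc : c ≠ 0) : (c • A)⁻¹ = c⁻¹ • A⁻¹ := by
  by_cases hA : IsUnit A.det
  · exact Matrix.inv_smul' A (Units.mk0 c hc) hA
  · have hcA : ¬IsUnit (c • A).det := by
      rwa [det_smul, IsUnit.mul_iff, and_iff_right (isUnit_iff_ne_zero.2 (pow_ne_zero _ hc))]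
    rw [nonsing_inv_apply_not_isUnit _ hA, nonsing_inv_apply_not_isUnit _ hcA, smul_zero]

theorem specNorm_nonneg {m n : ℕ} (M : Matrix (Fin m) (Fin n) ℝ) : 0 ≤ specNorm M :=
  Real.sSup_nonneg fun _ ⟨_, _, hr⟩ => hr ▸ norm_nonneg _

theorem specNorm_smul {m n : ℕ} (c : ℝ) (M : Matrix (Fin m) (Fin n) ℝ) :
    specNorm (c • M) = |c| * specNorm M := by
  rw [specNorm, specNorm, ← smul_eq_mul, ← Real.sSup_smul_of_nonneg (abs_nonneg c)]
  congr 1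
  ext r
  simp [Set.mem_smul_set, smul_mulVec, norm_smul, eq_comm]

theorem topBasis_transpose_mul_diagonal {d k : ℕ} {w : Fin d → ℝ} {a : ℝ}
    (hw : ∀ i : Fin d, (i : ℕ) < k → w i = a) :
    (topBasis d k)ᵀ * diagonal w = a • (topBasis d k)ᵀ := by
  ext j i
  by_cases hij : (i : ℕ) = j
  · simp [topBasis, hij, hw i (hij ▸ j.2)]
  · simp [topBasis, hij]

theorem botBasis_transpose_mul_diagonal {d k : ℕ} {w : Fin d → ℝ} {b : ℝ}
    (hw : ∀ i : Fin d, k ≤ (i : ℕ) → w i = b) :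
    (botBasis d k)ᵀ * diagonal w = b • (botBasis d k)ᵀ := by
  ext j i
  by_cases hij : (i : ℕ) = j + k
  · simp [botBasis, hij, hw i (by omega)]
  · simp [botBasis, hij]

theorem tanThetaK_mul_of_isUnit {d k : ℕ} (M : Matrix (Fin d) (Fin k) ℝ)
    {R : Matrix (Fin k) (Fin k) ℝ} (hR : IsUnit R) :
    tanThetaK d k (M * R) = tanThetaK d k M := by
  have hRR : R * R⁻¹ = 1 := mul_nonsing_inv R ((isUnit_iff_isUnit_det R).1 hR)
  rw [tanThetaK, tanThetaK, ← Matrix.mul_assoc, ← Matrix.mul_assoc, Matrix.mul_inv_rev,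
    Matrix.mul_assoc _ R, ← Matrix.mul_assoc R, hRR, Matrix.one_mul]

theorem tanThetaK_diagonal_mul {d k : ℕ} (M : Matrix (Fin d) (Fin k) ℝ) {w : Fin d → ℝ}
    {a b : ℝ} (ha : a ≠ 0) (hwa : ∀ i : Fin d, (i : ℕ) < k → w i = a)
    (hwb : ∀ i : Fin d, k ≤ (i : ℕ) → w i = b) :
    tanThetaK d k (diagonal w * M) = |b / a| * tanThetaK d k M := by
  simp only [tanThetaK, ← Matrix.mul_assoc, topBasis_transpose_mul_diagonal hwa,
    botBasis_transpose_mul_diagonal hwb, Matrix.smul_mul, Matrix.inv_smul_of_ne_zero _ ha,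
    Matrix.mul_smul, smul_smul, ← specNorm_smul, div_eq_inv_mul]

theorem pow_div_le_two_mul_pow_div_add_pow {s a b : ℝ} (hs : 0 ≤ s) (ha : 0 < a) (hb : 0 ≤ b)
    (hba : b ≤ a) (t : ℕ) : (s / a) ^ t ≤ 2 * s ^ t / (a ^ t + b ^ t) := by
  have hbt : b ^ t ≤ a ^ t := pow_le_pow_left₀ hb hba t
  calc (s / a) ^ t = 2 * s ^ t / (a ^ t + a ^ t) := by
        rw [div_pow, ← two_mul, mul_div_mul_left _ _ two_ne_zero]
    _ ≤ 2 * s ^ t / (a ^ t + b ^ t) := by gcongr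

theorem stmt13_general (d k : ℕ)
    (β lam : ℝ) (hβ : 0 < Real.sqrt β) (hlam : 2 * Real.sqrt β < lam)
    (p : ℕ → ℝ → ℝ) (hp0 : ∀ x, p 0 x = 1) (hp1 : ∀ x, p 1 x = x / 2)
    (hprec : ∀ t x, p (t + 2) x = x * p (t + 1) x - β * p t x)
    (X : ℕ → Matrix (Fin d) (Fin k) ℝ) (R : ℕ → Matrix (Fin k) (Fin k) ℝ)
    (hRunit : ∀ t, IsUnit (R t))
    (hfac : ∀ t,
      Matrix.diagonal (fun i : Fin d =>
          p t (if (i : ℕ) < k then lam else 2 * Real.sqrt β)) * X 0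
        = X t * R t) :
    ∀ t : ℕ,
      tanThetaK d k (X t)
          = (2 * Real.sqrt β ^ t
              / (((lam + Real.sqrt (lam ^ 2 - 4 * β)) / 2) ^ t
                + ((lam - Real.sqrt (lam ^ 2 - 4 * β)) / 2) ^ t))
            * tanThetaK d k (X 0) ∧
      (Real.sqrt β / ((lam + Real.sqrt (lam ^ 2 - 4 * β)) / 2)) ^ t
          * tanThetaK d k (X 0)
        ≤ tanThetaK d k (X t) := by
  intro t
  have hβ0 : 0 < β := Real.sqrt_pos.1 hβ
  set sb := Real.sqrt β
  set s := Real.sqrt (lam ^ 2 - 4 * β)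
  have hdisc : 0 ≤ lam ^ 2 - 4 * β := by nlinarith [Real.sq_sqrt hβ0.le]
  have hs : s < lam := (Real.sqrt_lt' (by linarith)).2 (by linarith)
  have hlm : 0 < (lam - s) / 2 := by linarith
  have hlmp : (lam - s) / 2 ≤ (lam + s) / 2 := by linarith [Real.sqrt_nonneg (lam ^ 2 - 4 * β)]
  have hlp : 0 < (lam + s) / 2 := hlm.trans_le hlmp
  set lp := (lam + s) / 2
  set lm := (lam - s) / 2
  have hplam : p t lam = (lp ^ t + lm ^ t) / 2 :=
    chebyshev_eq_pow_add_pow (p := (p · lam)) (by ring)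
      (by linear_combination (-1 / 4 : ℝ) * Real.sq_sqrt hdisc) (hp0 _) (hp1 _)
      (fun n => hprec n _) t
  have hpsb : p t (2 * sb) = sb ^ t := by
    rw [chebyshev_eq_pow_add_pow (p := (p · (2 * sb))) (two_mul sb).symm
      (Real.mul_self_sqrt hβ0.le) (hp0 _) (hp1 _) (fun n => hprec n _) t, add_self_div_two]
  have htan : tanThetaK d k (X t) = |p t (2 * sb) / p t lam| * tanThetaK d k (X 0) := by
    rw [← tanThetaK_mul_of_isUnit _ (hRunit t), ← hfac]
    refine tanThetaK_diagonal_mul _ ?_ (fun i hi => congrArg (p t) (if_pos hi))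
      (fun i hi => congrArg (p t) (if_neg (not_lt.2 hi)))
    rw [hplam]
    positivity
  rw [htan, hpsb, hplam, abs_of_nonneg (by positivity), div_div_eq_mul_div, mul_comm _ 2]
  exact ⟨rfl, mul_le_mul_of_nonneg_right
    (pow_div_le_two_mul_pow_div_add_pow hβ.le hlp hlm.le hlmp t)
    (specNorm_nonneg _)⟩

/-- noiseless momentum power iteration on
A = diag(λ,…,λ,2√β,…,2√β) (λ repeated k times), λ > 2√β > 0: the iterates X_t
(Q-factors of Z_t = p_t(A)X₀ for invertible upper-triangular R_t) satisfy
tan θ_k(U_k, X_t) = (2(√β)^t/((λ⁺)^t + (λ⁻)^t))·tan θ_k(U_k, X₀)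
≥ (√β/λ⁺)^t·tan θ_k(U_k, X₀), where λ^± = (λ ± √(λ²−4β))/2. -/
theorem stmt13 (d k : ℕ) (hk : 0 < k) (hkd : k ≤ d)
    (β lam : ℝ) (hβ : 0 < Real.sqrt β) (hlam : 2 * Real.sqrt β < lam)
    (p : ℕ → ℝ → ℝ) (hp0 : ∀ x, p 0 x = 1) (hp1 : ∀ x, p 1 x = x / 2)
    (hprec : ∀ t x, p (t + 2) x = x * p (t + 1) x - β * p t x)
    (X : ℕ → Matrix (Fin d) (Fin k) ℝ) (R : ℕ → Matrix (Fin k) (Fin k) ℝ)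
    (horth : ∀ t, (X t)ᵀ * X t = 1)
    (hRunit : ∀ t, IsUnit (R t))
    (hRtri : ∀ t, (R t).BlockTriangular id)
    (hfac : ∀ t,
      Matrix.diagonal (fun i : Fin d =>
          p t (if (i : ℕ) < k then lam else 2 * Real.sqrt β)) * X 0
        = X t * R t)
    (hcos : 0 < sigmaMin ((topBasis d k)ᵀ * X 0)) :
    ∀ t : ℕ,
      tanThetaK d k (X t)
          = (2 * Real.sqrt β ^ t
              / (((lam + Real.sqrt (lam ^ 2 - 4 * β)) / 2) ^ t
                + ((lam - Real.sqrt (lam ^ 2 - 4 * β)) / 2) ^ t))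
            * tanThetaK d k (X 0) ∧
      (Real.sqrt β / ((lam + Real.sqrt (lam ^ 2 - 4 * β)) / 2)) ^ t
          * tanThetaK d k (X 0)
        ≤ tanThetaK d k (X t) :=
  stmt13_general d k β lam hβ hlam p hp0 hp1 hprec X R hRunit hfac
end

section
/- Let A = diag(λ, 2√β) ∈ ℝ^{2×2} with λ > 2√β > 0, and let v₁ be the first standard basis vector of ℝ². Consider the iteration y₁ = (1/2)A x₀ − (1/2)(λ−2√β)(v₁ᵀx₀)v₁, x₁ = y₁/‖y₁‖; and for t ≥ 1, y_{t+1} = A x_t − β x_{t−1}/‖y_t‖ − (λ−2√β)(v₁ᵀx_t)v₁, x_{t+1} = y_{t+1}/‖y_{t+1}‖, starting from a unit vector x₀ with v₁ᵀx₀ > 0. Then for all t ≥ 0, x_t ∈ span(x₀) and hence the angle between v₁ and x_t equals the angle between v₁ and x₀ for all t. -/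
/-!
Deflating the top eigenvalue turns `A = diag(λ, 2√β)` into `2√β • I`:
`A x - (λ - 2√β)(v₁ᵀx) v₁ = 2√β x`. Hence `y₁ = √β • x₀`, so `x₁ = x₀` and `‖y₁‖ = √β`,
and inductively, if `x_{t-1} = x_t = x₀` and `‖y_t‖ = √β`, then
`y_{t+1} = 2√β • x₀ - (β / √β) • x₀ = √β • x₀`, so again `x_{t+1} = x₀`.
-/

open Matrix

/-- Euclidean norm on ℝ² (as `Fin 2 → ℝ`). -/
noncomputable def enorm2 (v : Fin 2 → ℝ) : ℝ := Real.sqrt (v 0 ^ 2 + v 1 ^ 2)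

lemma enorm2_smul (c : ℝ) (v : Fin 2 → ℝ) : enorm2 (c • v) = |c| * enorm2 v := by
  have h : (c • v) 0 ^ 2 + (c • v) 1 ^ 2 = c ^ 2 * (v 0 ^ 2 + v 1 ^ 2) := by
    simp only [Pi.smul_apply, smul_eq_mul]
    ring
  rw [enorm2, enorm2, h, Real.sqrt_mul (sq_nonneg c), Real.sqrt_sq_eq_abs]

lemma enorm2_smul_of_enorm2_eq_one {c : ℝ} (hc : 0 ≤ c) {v : Fin 2 → ℝ} (hv : enorm2 v = 1) :
    enorm2 (c • v) = c := by
  rw [enorm2_smul, hv, mul_one, abs_of_nonneg hc]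

lemma inv_enorm2_smul_smul_of_enorm2_eq_one {c : ℝ} (hc : 0 < c) {v : Fin 2 → ℝ}
    (hv : enorm2 v = 1) : (enorm2 (c • v))⁻¹ • c • v = v := by
  rw [enorm2_smul_of_enorm2_eq_one hc.le hv, inv_smul_smul₀ hc.ne']

lemma diagonal_mulVec_sub_deflate {R : Type*} [CommRing R] (a b : R) (v : Fin 2 → R) :
    (diagonal ![a, b]) *ᵥ v - ((a - b) * v 0) • ![1, 0] = b • v := by
  ext i
  fin_cases i
  · simp
    ring
  · simp

theorem stmt15_general (β lam : ℝ) (hβ : 0 < Real.sqrt β)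
    (A : Matrix (Fin 2) (Fin 2) ℝ)
    (hA : A = Matrix.diagonal ![lam, 2 * Real.sqrt β])
    (v1 : Fin 2 → ℝ) (hv1 : v1 = ![1, 0])
    (x y : ℕ → Fin 2 → ℝ)
    (hx0 : enorm2 (x 0) = 1)
    (hy1 : y 1 = (1/2 : ℝ) • A.mulVec (x 0)
      - ((1/2) * (lam - 2 * Real.sqrt β) * (x 0 0)) • v1)
    (hx1 : x 1 = (enorm2 (y 1))⁻¹ • y 1)
    (hyrec : ∀ t, 1 ≤ t → y (t + 1) = A.mulVec (x t)
      - (β / enorm2 (y t)) • x (t - 1)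
      - ((lam - 2 * Real.sqrt β) * (x t 0)) • v1)
    (hxrec : ∀ t, 1 ≤ t → x (t + 1) = (enorm2 (y (t + 1)))⁻¹ • y (t + 1)) :
    ∀ t : ℕ, (∃ c : ℝ, c ≠ 0 ∧ x t = c • x 0) ∧
      Real.arccos |x t 0| = Real.arccos |x 0 0| := by
  subst hA hv1
  set s := Real.sqrt β
  have hy1' : y 1 = s • x 0 := by
    rw [hy1, mul_assoc, ← smul_smul, ← smul_sub, diagonal_mulVec_sub_deflate, smul_smul]
    congr 1
    ring
  have hβs : β / s = s := Real.div_sqrt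
  have fixed : ∀ t, x t = x 0 ∧ y (t + 1) = s • x 0 ∧ x (t + 1) = x 0 := by
    intro t
    induction t with
    | zero =>
      exact ⟨rfl, hy1', by rw [hx1, hy1', inv_enorm2_smul_smul_of_enorm2_eq_one hβ hx0]⟩
    | succ t ih =>
      obtain ⟨hxt, hyt, hxt1⟩ := ih
      have hy : y (t + 2) = s • x 0 := by
        rw [hyrec (t + 1) t.succ_pos, hxt1, Nat.add_sub_cancel, hxt, hyt,
          enorm2_smul_of_enorm2_eq_one hβ.le hx0, hβs, sub_right_comm,
          diagonal_mulVec_sub_deflate, ← sub_smul, two_mul, add_sub_cancel_right]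
      exact ⟨hxt1, hy, by rw [hxrec (t + 1) t.succ_pos, hy,
        inv_enorm2_smul_smul_of_enorm2_eq_one hβ hx0]⟩
  intro t
  rw [(fixed t).1]
  exact ⟨⟨1, one_ne_zero, (one_smul ℝ _).symm⟩, rfl⟩

/-- for A = diag(λ, 2√β) with λ > 2√β > 0 and the perturbed
momentum iteration y₁ = (1/2)Ax₀ − (1/2)(λ−2√β)(v₁ᵀx₀)v₁, x₁ = y₁/‖y₁‖,
y_{t+1} = Ax_t − βx_{t−1}/‖y_t‖ − (λ−2√β)(v₁ᵀx_t)v₁, x_{t+1} = y_{t+1}/‖y_{t+1}‖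
(starting from a unit vector x₀ with v₁ᵀx₀ > 0), every iterate x_t lies in
span(x₀), and hence the (principal) angle between v₁ and x_t equals the angle
between v₁ and x₀, for all t. -/
theorem stmt15 (β lam : ℝ) (hβ : 0 < Real.sqrt β) (hlam : 2 * Real.sqrt β < lam)
    (A : Matrix (Fin 2) (Fin 2) ℝ)
    (hA : A = Matrix.diagonal ![lam, 2 * Real.sqrt β])
    (v1 : Fin 2 → ℝ) (hv1 : v1 = ![1, 0])
    (x y : ℕ → Fin 2 → ℝ)
    (hx0 : enorm2 (x 0) = 1) (hx0pos : 0 < x 0 0)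
    (hy1 : y 1 = (1/2 : ℝ) • A.mulVec (x 0)
      - ((1/2) * (lam - 2 * Real.sqrt β) * (x 0 0)) • v1)
    (hx1 : x 1 = (enorm2 (y 1))⁻¹ • y 1)
    (hyrec : ∀ t, 1 ≤ t → y (t + 1) = A.mulVec (x t)
      - (β / enorm2 (y t)) • x (t - 1)
      - ((lam - 2 * Real.sqrt β) * (x t 0)) • v1)
    (hxrec : ∀ t, 1 ≤ t → x (t + 1) = (enorm2 (y (t + 1)))⁻¹ • y (t + 1)) :
    ∀ t : ℕ, (∃ c : ℝ, c ≠ 0 ∧ x t = c • x 0) ∧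
      Real.arccos |x t 0| = Real.arccos |x 0 0| :=
  stmt15_general β lam hβ A hA v1 hv1 x y hx0 hy1 hx1 hyrec hxrec
end

section
/- Let λ > 2√β > 0, c = 1/32 and Δ = 1 − 2√β/λ. Suppose U ∈ St(d,k), X ∈ St(d,k) with cos θ_k(U,X) > 0, G is a k×k matrix with ‖G‖₂ ≤ 1/(1/2 − c), and Y ∈ ℝ^{d×k} satisfies UᵀY = Λ G^{-1}(UᵀX) where Λ is a diagonal k×k matrix with all diagonal entries ≥ λ. Then the smallest singular value of Y satisfies σ_min(Y) ≥ λ·cos θ_k(U,X)·(1/2 − c) > 0; in particular Y has full column rank and its Moore–Penrose pseudoinverse satisfies ‖Y†‖₂ ≤ 1/(λ·cos θ_k(U,X)·(1/2 − c)). -/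
/-!
Because `U` has orthonormal columns, `Uᵀ` is a contraction, so
`σ_min(Y) ≥ σ_min(UᵀY) = σ_min(Λ G⁻¹ UᵀX) ≥ σ_min(Λ) σ_min(G⁻¹) σ_min(UᵀX) ≥ λ ‖G‖₂⁻¹ cos θ_k(U,X)`.
A positive `σ_min(Y)` makes `Y` injective, hence `YᵀY` invertible and `rank Y = k`. For
`w = Y†v` the normal equations `YᵀY w = Yᵀv` give `‖Yw‖² = ⟪Yw, v⟫`, so `‖Yw‖ ≤ ‖v‖` and
`σ_min(Y) ‖w‖ ≤ ‖v‖`, i.e. `‖Y†‖₂ ≤ σ_min(Y)⁻¹`.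
-/

open Matrix

open scoped RealInnerProductSpace

section SingularValues

variable {m n : ℕ}

lemma sigmaMin_nonneg (M : Matrix (Fin m) (Fin n) ℝ) : 0 ≤ sigmaMin M :=
  Real.sInf_nonneg fun _ ⟨_, _, hr⟩ => hr ▸ norm_nonneg _

lemma sigmaMin_le_norm (M : Matrix (Fin m) (Fin n) ℝ) {v : EuclideanSpace ℝ (Fin n)}
    (hv : ‖v‖ = 1) : sigmaMin M ≤ ‖M.toEuclideanLin v‖ :=
  csInf_le ⟨0, fun _ ⟨_, _, hr⟩ => hr ▸ norm_nonneg _⟩ ⟨v, hv, rfl⟩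

lemma sigmaMin_mul_norm_le (M : Matrix (Fin m) (Fin n) ℝ) (v : EuclideanSpace ℝ (Fin n)) :
    sigmaMin M * ‖v‖ ≤ ‖M.toEuclideanLin v‖ := by
  rcases eq_or_ne v 0 with rfl | hv
  · simp
  · have hu : ‖(‖v‖⁻¹ : ℝ) • v‖ = 1 := by
      rw [norm_smul, norm_inv, norm_norm, inv_mul_cancel₀ (norm_ne_zero_iff.2 hv)]
    have h := sigmaMin_le_norm M hu
    rwa [map_smul, norm_smul, norm_inv, norm_norm, ← div_eq_inv_mul,
      le_div_iff₀ (norm_pos_iff.2 hv)] at h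

lemma le_sigmaMin [NeZero n] {M : Matrix (Fin m) (Fin n) ℝ} {b : ℝ}
    (h : ∀ v, b * ‖v‖ ≤ ‖M.toEuclideanLin v‖) : b ≤ sigmaMin M :=
  le_csInf ⟨_, EuclideanSpace.single 0 1, by simp, rfl⟩
    fun _ ⟨v, hv, hr⟩ => hr ▸ (by simpa [hv] using h v : b ≤ ‖M.toEuclideanLin v‖)

lemma neZero_of_sigmaMin_pos {M : Matrix (Fin m) (Fin n) ℝ} (h : 0 < sigmaMin M) : NeZero n := by
  -- for `n = 0` the unit sphere is empty and `sInf ∅ = 0`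
  refine ⟨fun hn => h.ne' ?_⟩
  subst hn
  simp [sigmaMin, Subsingleton.elim _ (0 : EuclideanSpace ℝ (Fin 0))]

lemma norm_le_specNorm_mul (M : Matrix (Fin m) (Fin n) ℝ) (v : EuclideanSpace ℝ (Fin n)) :
    ‖M.toEuclideanLin v‖ ≤ specNorm M * ‖v‖ := by
  have hbdd : BddAbove {r | ∃ v : EuclideanSpace ℝ (Fin n), ‖v‖ = 1 ∧
      r = ‖(WithLp.equiv 2 (Fin m → ℝ)).symm (M.mulVec (WithLp.equiv 2 (Fin n → ℝ) v))‖} := by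
    refine ⟨‖LinearMap.toContinuousLinearMap M.toEuclideanLin‖, ?_⟩
    rintro _ ⟨v, hv, rfl⟩
    exact (LinearMap.toContinuousLinearMap M.toEuclideanLin).unit_le_opNorm v hv.le
  rcases eq_or_ne v 0 with rfl | hv
  · simp
  · have hu : ‖(‖v‖⁻¹ : ℝ) • v‖ = 1 := by
      rw [norm_smul, norm_inv, norm_norm, inv_mul_cancel₀ (norm_ne_zero_iff.2 hv)]
    have h : ‖M.toEuclideanLin ((‖v‖⁻¹ : ℝ) • v)‖ ≤ specNorm M := le_csSup hbdd ⟨_, hu, rfl⟩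
    rwa [map_smul, norm_smul, norm_inv, norm_norm, ← div_eq_inv_mul,
      div_le_iff₀ (norm_pos_iff.2 hv)] at h

lemma specNorm_le {M : Matrix (Fin m) (Fin n) ℝ} {b : ℝ} (hb : 0 ≤ b)
    (h : ∀ v, ‖M.toEuclideanLin v‖ ≤ b * ‖v‖) : specNorm M ≤ b :=
  Real.sSup_le (fun _ ⟨v, hv, hr⟩ => hr ▸ (by simpa [hv] using h v : ‖M.toEuclideanLin v‖ ≤ b)) hb

end SingularValues

section Products

variable {l m n : ℕ}

lemma toEuclideanLin_mul_apply (A : Matrix (Fin l) (Fin m) ℝ) (B : Matrix (Fin m) (Fin n) ℝ)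
    (v : EuclideanSpace ℝ (Fin n)) :
    (A * B).toEuclideanLin v = A.toEuclideanLin (B.toEuclideanLin v) := by
  simp

lemma inner_toEuclideanLin_left (A : Matrix (Fin m) (Fin n) ℝ) (x : EuclideanSpace ℝ (Fin n))
    (y : EuclideanSpace ℝ (Fin m)) : ⟪A.toEuclideanLin x, y⟫ = ⟪x, Aᵀ.toEuclideanLin y⟫ := by
  rw [← conjTranspose_eq_transpose_of_trivial, toEuclideanLin_conjTranspose_eq_adjoint,
    LinearMap.adjoint_inner_right]

lemma norm_toEuclideanLin_sq (A : Matrix (Fin m) (Fin n) ℝ) (x : EuclideanSpace ℝ (Fin n)) :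
    ‖A.toEuclideanLin x‖ ^ 2 = ⟪x, (Aᵀ * A).toEuclideanLin x⟫ := by
  rw [← real_inner_self_eq_norm_sq, inner_toEuclideanLin_left, toEuclideanLin_mul_apply]

lemma le_of_sq_le_mul {a b : ℝ} (hb : 0 ≤ b) (h : a ^ 2 ≤ a * b) : a ≤ b := by
  nlinarith

lemma norm_toEuclideanLin_of_orthonormal {U : Matrix (Fin m) (Fin n) ℝ} (hU : Uᵀ * U = 1)
    (z : EuclideanSpace ℝ (Fin n)) : ‖U.toEuclideanLin z‖ = ‖z‖ := by
  rw [← sq_eq_sq₀ (norm_nonneg _) (norm_nonneg _), norm_toEuclideanLin_sq, hU,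
    ← real_inner_self_eq_norm_sq]
  simp

lemma norm_transpose_toEuclideanLin_le {U : Matrix (Fin m) (Fin n) ℝ} (hU : Uᵀ * U = 1)
    (w : EuclideanSpace ℝ (Fin m)) : ‖Uᵀ.toEuclideanLin w‖ ≤ ‖w‖ := by
  refine le_of_sq_le_mul (norm_nonneg _) ?_
  calc ‖Uᵀ.toEuclideanLin w‖ ^ 2 = ⟪U.toEuclideanLin (Uᵀ.toEuclideanLin w), w⟫ := by
        rw [inner_toEuclideanLin_left, real_inner_self_eq_norm_sq]
    _ ≤ ‖U.toEuclideanLin (Uᵀ.toEuclideanLin w)‖ * ‖w‖ := real_inner_le_norm _ _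
    _ = ‖Uᵀ.toEuclideanLin w‖ * ‖w‖ := by rw [norm_toEuclideanLin_of_orthonormal hU]

lemma sigmaMin_transpose_mul_le [NeZero n] {U : Matrix (Fin m) (Fin l) ℝ} (hU : Uᵀ * U = 1)
    (Y : Matrix (Fin m) (Fin n) ℝ) : sigmaMin (Uᵀ * Y) ≤ sigmaMin Y :=
  le_sigmaMin fun v => (sigmaMin_mul_norm_le _ v).trans <| by
    rw [toEuclideanLin_mul_apply]; exact norm_transpose_toEuclideanLin_le hU _

lemma sigmaMin_mul_sigmaMin_le [NeZero n] (A : Matrix (Fin l) (Fin m) ℝ)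
    (B : Matrix (Fin m) (Fin n) ℝ) : sigmaMin A * sigmaMin B ≤ sigmaMin (A * B) :=
  le_sigmaMin fun v => calc
    sigmaMin A * sigmaMin B * ‖v‖ ≤ sigmaMin A * ‖B.toEuclideanLin v‖ := by
      rw [mul_assoc]; exact mul_le_mul_of_nonneg_left (sigmaMin_mul_norm_le B v) (sigmaMin_nonneg A)
    _ ≤ ‖(A * B).toEuclideanLin v‖ := by
      rw [toEuclideanLin_mul_apply]; exact sigmaMin_mul_norm_le A _

lemma inv_le_sigmaMin_nonsing_inv [NeZero n] {G : Matrix (Fin n) (Fin n) ℝ} (hG : IsUnit G)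
    {b : ℝ} (hb : 0 < b) (hGb : specNorm G ≤ b) : b⁻¹ ≤ sigmaMin G⁻¹ :=
  le_sigmaMin fun v => by
    have hv : ‖v‖ ≤ b * ‖G⁻¹.toEuclideanLin v‖ := calc
      ‖v‖ = ‖G.toEuclideanLin (G⁻¹.toEuclideanLin v)‖ := by
        rw [← toEuclideanLin_mul_apply, mul_nonsing_inv G ((isUnit_iff_isUnit_det G).1 hG)]; simp
      _ ≤ specNorm G * ‖G⁻¹.toEuclideanLin v‖ := norm_le_specNorm_mul G _
      _ ≤ b * ‖G⁻¹.toEuclideanLin v‖ := by gcongr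
    rwa [inv_mul_le_iff₀ hb]

lemma le_sigmaMin_diagonal [NeZero n] {a : Fin n → ℝ} {lam : ℝ} (hlam : 0 ≤ lam)
    (ha : ∀ i, lam ≤ a i) : lam ≤ sigmaMin (diagonal a) :=
  le_sigmaMin fun v => by
    rw [← pow_le_pow_iff_left₀ (by positivity) (norm_nonneg _) two_ne_zero, mul_pow,
      EuclideanSpace.norm_sq_eq, EuclideanSpace.norm_sq_eq, Finset.mul_sum]
    refine Finset.sum_le_sum fun i _ => ?_
    simp only [toLpLin_apply, mulVec_diagonal, Real.norm_eq_abs, sq_abs, mul_pow]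
    gcongr
    exact ha i

end Products

section FullColumnRank

variable {m n : ℕ} {Y : Matrix (Fin m) (Fin n) ℝ}

lemma mulVec_injective_of_sigmaMin_pos (hY : 0 < sigmaMin Y) : Function.Injective Y.mulVec := by
  intro x y hxy
  have h := sigmaMin_mul_norm_le Y (WithLp.toLp 2 (x - y))
  rw [toLpLin_toLp, toLin'_apply, mulVec_sub, hxy, sub_self, WithLp.toLp_zero, norm_zero] at h
  simpa [sub_eq_zero] using norm_le_zero_iff.1 (nonpos_of_mul_nonpos_right h hY)

lemma isUnit_transpose_mul_self_of_sigmaMin_pos (hY : 0 < sigmaMin Y) : IsUnit (Yᵀ * Y) := by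
  rw [← mulVec_injective_iff_isUnit, ← coe_mulVecLin, ← LinearMap.ker_eq_bot,
    ker_mulVecLin_transpose_mul_self, LinearMap.ker_eq_bot]
  exact mulVec_injective_of_sigmaMin_pos hY

lemma rank_eq_of_sigmaMin_pos (hY : 0 < sigmaMin Y) : Y.rank = n := by
  rw [← rank_transpose_mul_self, rank_of_isUnit _ (isUnit_transpose_mul_self_of_sigmaMin_pos hY),
    Fintype.card_fin]

lemma specNorm_pinv_le (hY : 0 < sigmaMin Y) : specNorm ((Yᵀ * Y)⁻¹ * Yᵀ) ≤ (sigmaMin Y)⁻¹ := by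
  have hdet := (isUnit_iff_isUnit_det _).1 (isUnit_transpose_mul_self_of_sigmaMin_pos hY)
  refine specNorm_le (inv_nonneg.2 hY.le) fun v => ?_
  set w := ((Yᵀ * Y)⁻¹ * Yᵀ).toEuclideanLin v
  have hnormal : (Yᵀ * Y).toEuclideanLin w = Yᵀ.toEuclideanLin v := by
    rw [← toEuclideanLin_mul_apply, mul_nonsing_inv_cancel_left _ _ hdet]
  have hYw : ‖Y.toEuclideanLin w‖ ≤ ‖v‖ := by
    refine le_of_sq_le_mul (norm_nonneg _) ?_
    calc ‖Y.toEuclideanLin w‖ ^ 2 = ⟪Y.toEuclideanLin w, v⟫ := by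
          rw [norm_toEuclideanLin_sq, hnormal, inner_toEuclideanLin_left Y]
      _ ≤ ‖Y.toEuclideanLin w‖ * ‖v‖ := real_inner_le_norm _ _
  rw [inv_mul_eq_div, le_div_iff₀ hY, mul_comm]
  exact (sigmaMin_mul_norm_le Y w).trans hYw

end FullColumnRank

theorem stmt19_general (d k : ℕ) (β lam c : ℝ) (hc : c = 1/32)
    (hlam : 2 * Real.sqrt β < lam)
    (U X : Matrix (Fin d) (Fin k) ℝ) (hU : Uᵀ * U = 1)
    (hcos : 0 < sigmaMin (Uᵀ * X))
    (G : Matrix (Fin k) (Fin k) ℝ) (hGu : IsUnit G)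
    (hG : specNorm G ≤ 1 / (1/2 - c))
    (a : Fin k → ℝ) (ha : ∀ i, lam ≤ a i)
    (Y : Matrix (Fin d) (Fin k) ℝ)
    (hY : Uᵀ * Y = Matrix.diagonal a * G⁻¹ * (Uᵀ * X)) :
    lam * sigmaMin (Uᵀ * X) * (1/2 - c) ≤ sigmaMin Y ∧
      0 < sigmaMin Y ∧ Y.rank = k ∧
      specNorm ((Yᵀ * Y)⁻¹ * Yᵀ)
        ≤ 1 / (lam * sigmaMin (Uᵀ * X) * (1/2 - c)) := by
  have := neZero_of_sigmaMin_pos hcos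
  have hc_pos : 0 < 1/2 - c := by norm_num [hc]
  have hlam_pos : 0 < lam := (mul_nonneg zero_le_two (Real.sqrt_nonneg β)).trans_lt hlam
  have hbound : lam * sigmaMin (Uᵀ * X) * (1/2 - c) ≤ sigmaMin Y := calc
    lam * sigmaMin (Uᵀ * X) * (1/2 - c) = lam * (1 / (1/2 - c))⁻¹ * sigmaMin (Uᵀ * X) := by
      simp only [one_div, inv_inv]; ring
    _ ≤ sigmaMin (diagonal a) * sigmaMin G⁻¹ * sigmaMin (Uᵀ * X) := by
      gcongr
      · exact sigmaMin_nonneg _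
      · exact le_sigmaMin_diagonal hlam_pos.le ha
      · exact inv_le_sigmaMin_nonsing_inv hGu (by positivity) hG
    _ ≤ sigmaMin (diagonal a * G⁻¹ * (Uᵀ * X)) :=
      (mul_le_mul_of_nonneg_right (sigmaMin_mul_sigmaMin_le _ _) (sigmaMin_nonneg _)).trans
        (sigmaMin_mul_sigmaMin_le _ _)
    _ = sigmaMin (Uᵀ * Y) := by rw [hY]
    _ ≤ sigmaMin Y := sigmaMin_transpose_mul_le hU Y
  have hpos : 0 < lam * sigmaMin (Uᵀ * X) * (1/2 - c) := by positivity
  have hYpos := hpos.trans_le hbound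
  refine ⟨hbound, hYpos, rank_eq_of_sigmaMin_pos hYpos, (specNorm_pinv_le hYpos).trans ?_⟩
  rw [one_div]
  exact inv_anti₀ hpos hbound

/-- if UᵀY = ΛG⁻¹(UᵀX) with U, X column-orthonormal,
cos θ_k(U,X) = σ_min(UᵀX) > 0, ‖G‖₂ ≤ 1/(1/2 − c) (c = 1/32, G invertible)
and Λ diagonal with entries ≥ λ, then σ_min(Y) ≥ λ·cos θ_k(U,X)·(1/2 − c) > 0;
in particular Y has full column rank and its Moore–Penrose pseudoinverse
(Y† = (YᵀY)⁻¹Yᵀ) satisfies ‖Y†‖₂ ≤ 1/(λ·cos θ_k(U,X)·(1/2 − c)). -/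
theorem stmt19 (d k : ℕ) (β lam c : ℝ) (hc : c = 1/32)
    (hβ : 0 < Real.sqrt β) (hlam : 2 * Real.sqrt β < lam)
    (U X : Matrix (Fin d) (Fin k) ℝ) (hU : Uᵀ * U = 1) (hX : Xᵀ * X = 1)
    (hcos : 0 < sigmaMin (Uᵀ * X))
    (G : Matrix (Fin k) (Fin k) ℝ) (hGu : IsUnit G)
    (hG : specNorm G ≤ 1 / (1/2 - c))
    (a : Fin k → ℝ) (ha : ∀ i, lam ≤ a i)
    (Y : Matrix (Fin d) (Fin k) ℝ)
    (hY : Uᵀ * Y = Matrix.diagonal a * G⁻¹ * (Uᵀ * X)) :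
    lam * sigmaMin (Uᵀ * X) * (1/2 - c) ≤ sigmaMin Y ∧
      0 < sigmaMin Y ∧ Y.rank = k ∧
      specNorm ((Yᵀ * Y)⁻¹ * Yᵀ)
        ≤ 1 / (lam * sigmaMin (Uᵀ * X) * (1/2 - c)) :=
  stmt19_general d k β lam c hc hlam U X hU hcos G hGu hG a ha Y hY
end
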